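/- arXiv:2004.05496 — 6 statements merged into one kernel-verified Lean document; each statement's English description precedes it below -/
import Mathlib

section
/- A bounded linear operator A on a Hilbert space H is norm-attainable if and only if its adjoint A* is norm-attainable. -/
/-! If `‖x‖ = 1` and `‖A x‖ = ‖A‖`, then `‖A‖ ‖A x‖ = ‖A x‖² = re ⟪A† (A x), x⟫ ≤ ‖A† (A x)‖`,
so `A†`, which has the same norm as `A`, attains its norm at the direction of `A x`
(or anywhere, when `A = 0`). Since `A†† = A`, the converse is the same statement for `A†`. -/

open ContinuousLinearMap RCLike
open scoped InnerProduct InnerProductSpace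

section

variable {𝕜 E F : Type*} [RCLike 𝕜]
  [NormedAddCommGroup E] [InnerProductSpace 𝕜 E] [NormedAddCommGroup F] [InnerProductSpace 𝕜 F]

def NormAttainable (T : E →L[𝕜] F) : Prop :=
  ∃ x : E, ‖x‖ = 1 ∧ ‖T x‖ = ‖T‖

variable [CompleteSpace E] [CompleteSpace F]

theorem norm_adjoint_apply_apply_of_norm_apply_eq {T : E →L[𝕜] F} {x : E}
    (hx : ‖x‖ = 1) (hTx : ‖T x‖ = ‖T‖) : ‖(T†) (T x)‖ = ‖T†‖ * ‖T x‖ := by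
  refine le_antisymm ((T†).le_opNorm _) ?_
  calc ‖T†‖ * ‖T x‖ = ‖T x‖ ^ 2 := by rw [adjoint.norm_map, ← hTx, sq]
    _ = re ⟪(T† ∘L T) x, x⟫_𝕜 := T.apply_norm_sq_eq_inner_adjoint_left x
    _ ≤ ‖(T†) (T x)‖ * ‖x‖ := re_inner_le_norm _ _
    _ = ‖(T†) (T x)‖ := by rw [hx, mul_one]

theorem NormAttainable.adjoint {T : E →L[𝕜] E} (hT : NormAttainable T) :
    NormAttainable (T†) := by
  obtain ⟨x, hx, hTx⟩ := hT
  by_cases hTx₀ : T x = 0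
  · have hT₀ : T = 0 := norm_eq_zero.mp (hTx ▸ norm_eq_zero.mpr hTx₀)
    exact ⟨x, hx, by simp [hT₀]⟩
  · have hnorm : ‖T x‖ ≠ 0 := norm_ne_zero_iff.mpr hTx₀
    refine ⟨(‖T x‖⁻¹ : 𝕜) • T x, ?_, ?_⟩
    · rw [norm_smul, norm_inv, norm_ofReal, abs_norm, inv_mul_cancel₀ hnorm]
    · rw [map_smul, norm_smul, norm_inv, norm_ofReal, abs_norm,
        norm_adjoint_apply_apply_of_norm_apply_eq hx hTx, mul_left_comm,
        inv_mul_cancel₀ hnorm, mul_one]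

end

theorem norm_attainable_iff_adjoint_norm_attainable
    {H : Type*} [NormedAddCommGroup H] [InnerProductSpace ℂ H] [CompleteSpace H]
    (A : H →L[ℂ] H) :
    (∃ x₀ : H, ‖x₀‖ = 1 ∧ ‖A x₀‖ = ‖A‖) ↔
    (∃ x₀ : H, ‖x₀‖ = 1 ∧ ‖(ContinuousLinearMap.adjoint A) x₀‖ = ‖ContinuousLinearMap.adjoint A‖) := by
  refine ⟨NormAttainable.adjoint, fun h => ?_⟩
  simpa only [NormAttainable, adjoint_adjoint] using NormAttainable.adjoint h
end

section
/- Let S ∈ B(H) and suppose there exists a unit vector ζ ∈ H with ‖Sζ‖ = ‖S‖ and ⟨Sζ, ζ⟩ = 0. Then the inner derivation δ_S(X) = SX − XS attains its norm; in particular there exists a contraction X with ‖X‖ = 1 and ‖SX − XS‖ = 2‖S‖. -/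
open scoped InnerProductSpace
theorem inner_derivation_norm_attainable
    {H : Type*} [NormedAddCommGroup H] [InnerProductSpace ℂ H] [CompleteSpace H]
    (S : H →L[ℂ] H) (ζ : H) (hζ : ‖ζ‖ = 1) (hS : ‖S ζ‖ = ‖S‖)
    (horth : ⟪S ζ, ζ⟫_ℂ = 0) :
    ∃ X : H →L[ℂ] H, ‖X‖ = 1 ∧ ‖S * X - X * S‖ = 2 * ‖S‖ := by
  set P : H →L[ℂ] H := (innerSL ℂ ζ).smulRight ζ with hP
  set X : H →L[ℂ] H := 1 - (2 : ℂ) • P with hX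
  have hPapp : ∀ v, P v = ⟪ζ, v⟫_ℂ • ζ := fun v => rfl
  have hXapp : ∀ v, X v = v - (2 : ℂ) • (⟪ζ, v⟫_ℂ • ζ) := fun v => rfl
  have hζζ : ⟪ζ, ζ⟫_ℂ = 1 := by
    rw [inner_self_eq_norm_sq_to_K, hζ]; norm_num
  have hXζ : X ζ = -ζ := by
    rw [hXapp, hζζ]; module
  -- isometry
  have hiso : ∀ v, ‖X v‖ = ‖v‖ := by
    intro v
    have hsq : ‖X v‖ ^ 2 = ‖v‖ ^ 2 := by
      rw [← inner_self_eq_norm_sq (𝕜 := ℂ), ← inner_self_eq_norm_sq (𝕜 := ℂ), hXapp]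
      simp only [inner_sub_sub_self, inner_smul_left, inner_smul_right]
      rw [hζζ, ← inner_conj_symm ζ v]
      congr 1
      simp only [map_ofNat, mul_one, Complex.conj_conj]
      ring
    nlinarith [hsq, norm_nonneg (X v), norm_nonneg v]
  have hXnorm : ‖X‖ = 1 := by
    apply le_antisymm
    · exact X.opNorm_le_bound zero_le_one (fun v => by rw [hiso, one_mul])
    · calc (1:ℝ) = ‖X ζ‖ := by rw [hXζ, norm_neg, hζ]
        _ ≤ ‖X‖ * ‖ζ‖ := X.le_opNorm ζ
        _ = ‖X‖ := by rw [hζ, mul_one]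
  refine ⟨X, hXnorm, le_antisymm ?_ ?_⟩
  · calc ‖S * X - X * S‖ ≤ ‖S * X‖ + ‖X * S‖ := norm_sub_le _ _
      _ ≤ ‖S‖ * ‖X‖ + ‖X‖ * ‖S‖ := add_le_add (norm_mul_le _ _) (norm_mul_le _ _)
      _ = 2 * ‖S‖ := by rw [hXnorm]; ring
  · have hζSζ : ⟪ζ, S ζ⟫_ℂ = 0 := by rw [← inner_conj_symm, horth, map_zero]
    have happ : (S * X - X * S) ζ = -((2:ℂ) • S ζ) := by
      simp only [ContinuousLinearMap.sub_apply, ContinuousLinearMap.mul_apply, hXζ, hXapp,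
        hζSζ, map_neg]
      module
    calc 2 * ‖S‖ = ‖(S * X - X * S) ζ‖ := by
          rw [happ, norm_neg, norm_smul, hS]; simp
      _ ≤ ‖S * X - X * S‖ * ‖ζ‖ := (S * X - X * S).le_opNorm ζ
      _ = ‖S * X - X * S‖ := by rw [hζ, mul_one]
end

section
/- Let S, T ∈ B(H) with S and T norm-attainable, say ‖Sζ‖ = ‖S‖ and ‖Tη‖ = ‖T‖ for unit vectors ζ, η. Then the basic elementary operator M_{S,T}(X) = SXT is norm-attainable on B(H): there exists X ∈ B(H) with ‖X‖ = 1 and ‖SXT‖ = ‖S‖·‖T‖. -/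
/-!
By Hahn–Banach there is a norm-one functional `g` with `g (T η) = ‖T η‖`; the rank-one
operator `X x = g x • ζ` has norm one and sends `T η` to `‖T‖ • ζ`, so
`‖S X T η‖ = ‖T‖ ‖S ζ‖ = ‖S‖ ‖T‖`. The reverse inequality is submultiplicativity.
-/

namespace ContinuousLinearMap

variable {𝕜 E F G K : Type*} [RCLike 𝕜]
  [NormedAddCommGroup E] [NormedSpace 𝕜 E] [NormedAddCommGroup F] [NormedSpace 𝕜 F]
  [NormedAddCommGroup G] [NormedSpace 𝕜 G] [NormedAddCommGroup K] [NormedSpace 𝕜 K]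

theorem exists_norm_eq_one_apply_eq_norm_smul [Nontrivial E] (x : E) {y : F} (hy : ‖y‖ = 1) :
    ∃ X : E →L[𝕜] F, ‖X‖ = 1 ∧ X x = (‖x‖ : 𝕜) • y := by
  obtain ⟨g, hg_norm, hg_apply⟩ := exists_dual_vector' 𝕜 x
  exact ⟨g.smulRight y, by rw [norm_smulRight_apply, hg_norm, hy, one_mul],
    by rw [smulRight_apply, hg_apply]⟩

theorem opNorm_eq_of_norm_apply_eq {A : E →L[𝕜] F} {x : E} {c : ℝ} (hx : ‖x‖ = 1)
    (hAx : ‖A x‖ = c) (hA : ‖A‖ ≤ c) : ‖A‖ = c :=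
  le_antisymm hA (hAx ▸ A.unit_le_opNorm x hx.le)

theorem exists_norm_eq_one_norm_comp_comp_eq [Nontrivial F] {S : G →L[𝕜] K} {T : E →L[𝕜] F}
    {ζ : G} {η : E} (hζ : ‖ζ‖ = 1) (hη : ‖η‖ = 1) (hS : ‖S ζ‖ = ‖S‖) (hT : ‖T η‖ = ‖T‖) :
    ∃ X : F →L[𝕜] G, ‖X‖ = 1 ∧ ‖(S.comp X).comp T‖ = ‖S‖ * ‖T‖ := by
  obtain ⟨X, hX_norm, hX_apply⟩ := exists_norm_eq_one_apply_eq_norm_smul (𝕜 := 𝕜) (T η) hζ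
  refine ⟨X, hX_norm, opNorm_eq_of_norm_apply_eq hη ?_ ?_⟩
  · rw [comp_apply, comp_apply, hX_apply, map_smul, norm_smul, RCLike.norm_ofReal, abs_norm,
      hT, hS, mul_comm]
  · calc ‖(S.comp X).comp T‖ ≤ ‖S‖ * ‖X‖ * ‖T‖ :=
          (opNorm_comp_le _ _).trans (by gcongr; exact opNorm_comp_le _ _)
      _ = ‖S‖ * ‖T‖ := by rw [hX_norm, mul_one]

end ContinuousLinearMap

theorem basic_elementary_operator_norm_attainable_general
    {H : Type*} [NormedAddCommGroup H] [InnerProductSpace ℂ H]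
    (S T : H →L[ℂ] H) (ζ η : H) (hζ : ‖ζ‖ = 1) (hη : ‖η‖ = 1)
    (hS : ‖S ζ‖ = ‖S‖) (hT : ‖T η‖ = ‖T‖) :
    ∃ X : H →L[ℂ] H, ‖X‖ = 1 ∧ ‖S * X * T‖ = ‖S‖ * ‖T‖ := by
  have : Nontrivial H := ⟨ζ, 0, ne_zero_of_norm_ne_zero (hζ ▸ one_ne_zero)⟩
  exact ContinuousLinearMap.exists_norm_eq_one_norm_comp_comp_eq hζ hη hS hT

theorem basic_elementary_operator_norm_attainable
    {H : Type*} [NormedAddCommGroup H] [InnerProductSpace ℂ H] [CompleteSpace H]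
    (S T : H →L[ℂ] H) (ζ η : H) (hζ : ‖ζ‖ = 1) (hη : ‖η‖ = 1)
    (hS : ‖S ζ‖ = ‖S‖) (hT : ‖T η‖ = ‖T‖) :
    ∃ X : H →L[ℂ] H, ‖X‖ = 1 ∧ ‖S * X * T‖ = ‖S‖ * ‖T‖ :=
  basic_elementary_operator_norm_attainable_general S T ζ η hζ hη hS hT
end

section
/- There exist 2×2 complex matrices A and B that commute, such that A² A* = A* A² and B² B* = B* B², but (A+B)² (A+B)* ≠ (A+B)* (A+B)²; concretely A = I and B the nilpotent matrix with a single 1 in the (1,2) entry. -/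
open scoped Matrix
theorem sum_of_two_normal_not_two_normal :
    ∃ A B : Matrix (Fin 2) (Fin 2) ℂ,
      A = 1 ∧ B = !![0, 1; 0, 0] ∧
      A * B = B * A ∧
      A ^ 2 * Aᴴ = Aᴴ * A ^ 2 ∧
      B ^ 2 * Bᴴ = Bᴴ * B ^ 2 ∧
      (A + B) ^ 2 * (A + B)ᴴ ≠ (A + B)ᴴ * (A + B) ^ 2 := by
  refine ⟨1, !![0,1;0,0], rfl, rfl, by simp, by simp, ?_, ?_⟩
  · ext i j
    fin_cases i <;> fin_cases j <;>
      simp [pow_two, Matrix.mul_apply, Matrix.conjTranspose_apply, Fin.sum_univ_two]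
  · intro h
    have := congrFun (congrFun h 0) 0
    simp [pow_two, Matrix.mul_apply, Matrix.conjTranspose_apply, Fin.sum_univ_two,
      Matrix.one_apply, Matrix.add_apply] at this
end

section
/- Let H be a Hilbert space, S, T ∈ B(H), and suppose there exist unit vectors ζ, η with ‖Sζ‖ = ‖S‖, ‖Tη‖ = ‖T‖, and Tη = φ‖T‖η, Sζ = ψ‖S‖ζ for unimodular scalars φ, ψ with ψ = −φ. Then there is a norm-one operator X (defined by Xη = ζ and X = 0 on η^⊥) with ‖SX − XT‖ = ‖S‖ + ‖T‖; hence the generalized derivation δ_{S,T} is norm-attainable. -/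
theorem generalized_derivation_norm_attainable
    {H : Type*} [NormedAddCommGroup H] [InnerProductSpace ℂ H] [CompleteSpace H]
    (S T : H →L[ℂ] H) (hS0 : S ≠ 0) (hT0 : T ≠ 0)
    (ζ η : H) (hζ : ‖ζ‖ = 1) (hη : ‖η‖ = 1)
    (hS : ‖S ζ‖ = ‖S‖) (hT : ‖T η‖ = ‖T‖)
    (φ ψ : ℂ) (hφ : ‖φ‖ = 1) (hψ : ‖ψ‖ = 1)
    (hTη : T η = (φ * (‖T‖ : ℂ)) • η)
    (hSζ : S ζ = (ψ * (‖S‖ : ℂ)) • ζ)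
    (hψφ : ψ = -φ) :
    ∃ X : H →L[ℂ] H, ‖X‖ = 1 ∧ ‖S * X - X * T‖ = ‖S‖ + ‖T‖ := by
  set X : H →L[ℂ] H := (innerSL ℂ η).smulRight ζ with hXdef
  have hXnorm : ‖X‖ = 1 := by
    rw [hXdef, ContinuousLinearMap.norm_smulRight_apply, innerSL_apply_norm, hη, hζ, one_mul]
  have hXη : X η = ζ := by
    simp only [hXdef, ContinuousLinearMap.smulRight_apply, innerSL_apply_apply]
    rw [inner_self_eq_norm_sq_to_K, hη]
    norm_num
  refine ⟨X, hXnorm, le_antisymm ?_ ?_⟩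
  · calc ‖S * X - X * T‖ ≤ ‖S * X‖ + ‖X * T‖ := norm_sub_le _ _
      _ ≤ ‖S‖ * ‖X‖ + ‖X‖ * ‖T‖ :=
        add_le_add (ContinuousLinearMap.opNorm_comp_le _ _) (ContinuousLinearMap.opNorm_comp_le _ _)
      _ = ‖S‖ + ‖T‖ := by rw [hXnorm]; ring
  · have happ : (S * X - X * T) η = (-φ * ((‖S‖ : ℂ) + ‖T‖)) • ζ := by
      have hXTη : X (T η) = (φ * (‖T‖ : ℂ)) • ζ := by
        rw [hTη, map_smul, hXη]
      simp only [ContinuousLinearMap.sub_apply, ContinuousLinearMap.mul_apply, hXη, hXTη, hSζ,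
        hψφ]
      rw [← sub_smul]
      ring_nf
    have : ‖(S * X - X * T) η‖ = ‖S‖ + ‖T‖ := by
      rw [happ, norm_smul, hζ, mul_one, norm_mul, norm_neg, hφ, one_mul]
      rw [show ((‖S‖ : ℂ) + ‖T‖) = ((‖S‖ + ‖T‖ : ℝ) : ℂ) by push_cast; ring,
        Complex.norm_real, Real.norm_of_nonneg (by positivity)]
    calc ‖S‖ + ‖T‖ = ‖(S * X - X * T) η‖ := this.symm
      _ ≤ ‖S * X - X * T‖ * ‖η‖ := ContinuousLinearMap.le_opNorm _ _
      _ = ‖S * X - X * T‖ := by rw [hη, mul_one]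
end

section
/- Let Ω be a σ-complete AM-space and φ a norm-one functional in the dual. If φ(x)·φ(y) = 0 for all x, y ∈ Ω with x ∧ y = 0, then ‖φ⁺‖·‖φ⁻‖ = 0, i.e., φ is either positive or negative. -/
/-!
Write `a = ‖φp‖` and `b = ‖φn‖`. On a positive `x`, `φ x = φp x - φn x` is a difference of a number
in `[0, a‖x‖]` and one in `[0, b‖x‖]`, so `|φ x| ≤ max a b * ‖x‖`. Since `z⁺ ⊓ z⁻ = 0`, the hypothesis
makes `φ z⁺` or `φ z⁻` vanish, so `φ z` is `φ z⁺` or `-φ z⁻`, and as the norm is solid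
`|φ z| ≤ max a b * ‖z‖`. Hence `a + b = ‖φ‖ ≤ max a b`, which forces `min a b = 0`.
-/

theorem ContinuousLinearMap.abs_apply_le_max_mul_norm_of_sub {E : Type*} [NormedAddCommGroup E]
    [NormedSpace ℝ E] [LE E] {φ φp φn : E →L[ℝ] ℝ}
    (hdecomp : φ = φp - φn) (hφp : ∀ z : E, 0 ≤ z → 0 ≤ φp z) (hφn : ∀ z : E, 0 ≤ z → 0 ≤ φn z)
    {x : E} (hx : 0 ≤ x) : |φ x| ≤ max ‖φp‖ ‖φn‖ * ‖x‖ := by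
  have hp : φp x ≤ max ‖φp‖ ‖φn‖ * ‖x‖ :=
    calc φp x ≤ ‖φp‖ * ‖x‖ := (le_abs_self _).trans (φp.le_opNorm x)
      _ ≤ max ‖φp‖ ‖φn‖ * ‖x‖ := by gcongr; exact le_max_left _ _
  have hn : φn x ≤ max ‖φp‖ ‖φn‖ * ‖x‖ :=
    calc φn x ≤ ‖φn‖ * ‖x‖ := (le_abs_self _).trans (φn.le_opNorm x)
      _ ≤ max ‖φp‖ ‖φn‖ * ‖x‖ := by gcongr; exact le_max_right _ _
  rw [hdecomp]
  exact abs_sub_le_of_nonneg_of_le (hφp x hx) hp (hφn x hx) hn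

section SolidNorm

variable {E : Type*} [NormedAddCommGroup E] [Lattice E] [HasSolidNorm E] [IsOrderedAddMonoid E]

theorem norm_posPart_le (x : E) : ‖x⁺‖ ≤ ‖x‖ :=
  norm_le_norm_of_abs_le_abs <| by
    rw [abs_of_nonneg (posPart_nonneg x)]
    exact sup_le (le_abs_self x) (abs_nonneg x)

theorem norm_negPart_le (x : E) : ‖x⁻‖ ≤ ‖x‖ :=
  norm_le_norm_of_abs_le_abs <| by
    rw [abs_of_nonneg (negPart_nonneg x)]
    exact sup_le (neg_le_abs x) (abs_nonneg x)

variable [NormedSpace ℝ E]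

theorem ContinuousLinearMap.opNorm_le_of_apply_posPart_mul_apply_negPart_eq_zero
    (φ : E →L[ℝ] ℝ) {C : ℝ} (hC : 0 ≤ C) (hdisj : ∀ z : E, φ z⁺ * φ z⁻ = 0)
    (hpos : ∀ x : E, 0 ≤ x → |φ x| ≤ C * ‖x‖) : ‖φ‖ ≤ C := by
  refine φ.opNorm_le_bound hC fun z => ?_
  have hsplit : φ z = φ z⁺ - φ z⁻ := by rw [← map_sub, posPart_sub_negPart]
  rw [Real.norm_eq_abs]
  rcases mul_eq_zero.mp (hdisj z) with h | h
  · calc |φ z| = |φ z⁻| := by rw [hsplit, h, zero_sub, abs_neg]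
      _ ≤ C * ‖z⁻‖ := hpos _ (negPart_nonneg z)
      _ ≤ C * ‖z‖ := by gcongr; exact norm_negPart_le z
  · calc |φ z| = |φ z⁺| := by rw [hsplit, h, sub_zero]
      _ ≤ C * ‖z⁺‖ := hpos _ (posPart_nonneg z)
      _ ≤ C * ‖z‖ := by gcongr; exact norm_posPart_le z

end SolidNorm

theorem AM_space_disjoint_support_functional_general
    {Ω : Type*} [NormedAddCommGroup Ω] [Lattice Ω] [HasSolidNorm Ω] [IsOrderedAddMonoid Ω] [NormedSpace ℝ Ω]
    (φ φp φn : Ω →L[ℝ] ℝ)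
    (hdecomp : φ = φp - φn)
    (hφp : ∀ z : Ω, 0 ≤ z → 0 ≤ φp z)
    (hφn : ∀ z : Ω, 0 ≤ z → 0 ≤ φn z)
    (hnorms : ‖φ‖ = ‖φp‖ + ‖φn‖)
    (hdisj : ∀ x y : Ω, x ⊓ y = 0 → φ x * φ y = 0) :
    ‖φp‖ * ‖φn‖ = 0 := by
  have hle : ‖φp‖ + ‖φn‖ ≤ max ‖φp‖ ‖φn‖ :=
    hnorms ▸ φ.opNorm_le_of_apply_posPart_mul_apply_negPart_eq_zero (by positivity)
      (fun z => hdisj _ _ (posPart_inf_negPart_eq_zero z))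
      (fun _ hx => φ.abs_apply_le_max_mul_norm_of_sub hdecomp hφp hφn hx)
  rcases max_cases ‖φp‖ ‖φn‖ with ⟨h, -⟩ | ⟨h, -⟩ <;> rw [h] at hle
  · rw [le_antisymm (by linarith) (norm_nonneg φn), mul_zero]
  · rw [le_antisymm (by linarith) (norm_nonneg φp), zero_mul]

theorem AM_space_disjoint_support_functional
    {Ω : Type*} [NormedAddCommGroup Ω] [Lattice Ω] [HasSolidNorm Ω] [IsOrderedAddMonoid Ω] [NormedSpace ℝ Ω]
    (hAM : ∀ x y : Ω, 0 ≤ x → 0 ≤ y → ‖x ⊔ y‖ = max ‖x‖ ‖y‖)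
    (hσ : ∀ f : ℕ → Ω, (∃ b : Ω, ∀ n, f n ≤ b) → ∃ s : Ω, IsLUB (Set.range f) s)
    (φ φp φn : Ω →L[ℝ] ℝ)
    (hdecomp : φ = φp - φn)
    (hφp : ∀ z : Ω, 0 ≤ z → 0 ≤ φp z)
    (hφn : ∀ z : Ω, 0 ≤ z → 0 ≤ φn z)
    (hnorms : ‖φ‖ = ‖φp‖ + ‖φn‖)
    (hφ1 : ‖φ‖ = 1)
    (hdisj : ∀ x y : Ω, x ⊓ y = 0 → φ x * φ y = 0) :
    ‖φp‖ * ‖φn‖ = 0 :=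
  AM_space_disjoint_support_functional_general φ φp φn hdecomp hφp hφn hnorms hdisj
end
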